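/- arXiv:2110.12602 — 6 statements merged into one kernel-verified Lean document; each statement's English description precedes it below -/
import Mathlib

section
/- Let f : 2^V → ℝ be a monotone submodular set function with f(∅) = 0. Suppose a sequence of sets ∅ = S₀ ⊆ S₁ ⊆ ... ⊆ S_k is built by adding one element at a time, and at each step j the marginal gain satisfies f(S_{j+1}) - f(S_j) ≥ (1/k)·(T - f(S_j)) for some threshold T ≥ 0. Then f(S_k) ≥ (1 - (1 - 1/k)^k)·T ≥ (1 - 1/e)·T. -/
open Finset Real

/-- Greedy-style recurrence for monotone submodular functions: if each step closes at
least a `1/k` fraction of the gap to threshold `T`, then after `k` steps the value is at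
least `(1 - (1-1/k)^k) T ≥ (1 - 1/e) T`. -/
theorem greedy_threshold_guarantee
    {V : Type*} [DecidableEq V] (f : Finset V → ℝ)
    (hmono : ∀ X Y : Finset V, X ⊆ Y → f X ≤ f Y)
    (hsub : ∀ (X Y : Finset V) (e : V), X ⊆ Y → e ∉ Y →
      f (insert e X) - f X ≥ f (insert e Y) - f Y)
    (hempty : f ∅ = 0)
    (k : ℕ) (hk : 0 < k) (T : ℝ) (hT : 0 ≤ T)
    (S : ℕ → Finset V) (hS0 : S 0 = ∅)
    (hchain : ∀ j < k, ∃ e : V, S (j + 1) = insert e (S j))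
    (hgain : ∀ j < k, f (S (j + 1)) - f (S j) ≥ (1 / k) * (T - f (S j))) :
    f (S k) ≥ (1 - (1 - 1 / k) ^ k) * T ∧
      (1 - (1 - 1 / (k : ℝ)) ^ k) * T ≥ (1 - 1 / Real.exp 1) * T := by
  have hk' : (0:ℝ) < k := by exact_mod_cast hk
  have hkle : 1 / (k:ℝ) ≤ 1 := by
    rw [div_le_one hk']; exact_mod_cast hk
  have hnn : (0:ℝ) ≤ 1 - 1 / k := by linarith
  have key : ∀ j ≤ k, T - f (S j) ≤ (1 - 1 / (k:ℝ)) ^ j * T := by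
    intro j hj
    induction j with
    | zero => simp [hS0, hempty]
    | succ n ih =>
      have hn : n < k := Nat.lt_of_succ_le hj
      have ihn := ih (le_of_lt hn)
      have hg := hgain n hn
      have : T - f (S (n + 1)) ≤ (1 - 1 / (k:ℝ)) * (T - f (S n)) := by
        nlinarith
      calc T - f (S (n + 1)) ≤ (1 - 1 / (k:ℝ)) * (T - f (S n)) := this
        _ ≤ (1 - 1 / (k:ℝ)) * ((1 - 1 / (k:ℝ)) ^ n * T) := by
            exact mul_le_mul_of_nonneg_left ihn hnn
        _ = (1 - 1 / (k:ℝ)) ^ (n + 1) * T := by ring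
  constructor
  · have := key k le_rfl
    nlinarith
  · have h1 : (1 - 1 / (k:ℝ)) ^ k ≤ (Real.exp (-(1 / k))) ^ k := by
      apply pow_le_pow_left₀ hnn
      linarith [Real.add_one_le_exp (-(1 / (k:ℝ)))]
    have h2 : (Real.exp (-(1 / (k:ℝ)))) ^ k = Real.exp (-1) := by
      rw [← Real.exp_nat_mul]
      congr 1
      field_simp
    have h3 : Real.exp (-1) = 1 / Real.exp 1 := by
      rw [Real.exp_neg]; ring
    have : (1 - 1 / (k:ℝ)) ^ k ≤ 1 / Real.exp 1 := by rw [← h3, ← h2]; exact h1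
    nlinarith
end

section
/- Let f : 2^V → ℝ be a monotone submodular set function and S ⊆ V a set with |S| < k such that every element o ∈ V has marginal gain f(S ∪ {o}) - f(S) < (1/k)·(T - f(S)) for some T. Then for every set O ⊆ V with |O| ≤ k, f(O) < T; equivalently, if there exists O with |O| ≤ k and f(O) ≥ T, then some element has marginal gain at least (1/k)·(T - f(S)). -/
open Finset

/-- If `|S| < k` and every element has marginal gain below `(1/k)(T - f S)`, then every
feasible set `O` (of size at most `k`) has `f O < T`; equivalently, if some feasible `O`
has `f O ≥ T`, then some element has marginal gain at least `(1/k)(T - f S)`. -/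
theorem small_marginals_bound_opt
    {V : Type*} [DecidableEq V] [Fintype V] [Nonempty V] (f : Finset V → ℝ)
    (hmono : ∀ X Y : Finset V, X ⊆ Y → f X ≤ f Y)
    (hsub : ∀ (X Y : Finset V) (e : V), X ⊆ Y → e ∉ Y →
      f (insert e X) - f X ≥ f (insert e Y) - f Y)
    (k : ℕ) (hk : 0 < k) (S : Finset V) (hS : S.card < k) (T : ℝ) :
    ((∀ o : V, f (insert o S) - f S < (1 / k) * (T - f S)) →
      ∀ O : Finset V, O.card ≤ k → f O < T) ∧
    ((∃ O : Finset V, O.card ≤ k ∧ f O ≥ T) →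
      ∃ o : V, f (insert o S) - f S ≥ (1 / k) * (T - f S)) := by
  have main : (∀ o : V, f (insert o S) - f S < (1 / k) * (T - f S)) →
      ∀ O : Finset V, O.card ≤ k → f O < T := by
    intro hmarg O hO
    -- some element exists
    obtain ⟨v⟩ := ‹Nonempty V›
    have hv := hmarg v
    have hnonneg : (0:ℝ) ≤ f (insert v S) - f S := by
      have := hmono S (insert v S) (subset_insert v S)
      linarith
    have hkpos : (0:ℝ) < (k:ℝ) := by exact_mod_cast hk
    have hTfS : f S < T := by
      have h1 : (0:ℝ) < (1 / k) * (T - f S) := lt_of_le_of_lt hnonneg hv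
      by_contra hc
      push_neg at hc
      nlinarith [mul_nonpos_of_nonneg_of_nonpos (by positivity : (0:ℝ) ≤ 1/(k:ℝ)) (by linarith : T - f S ≤ 0)]
    -- key lemma by induction
    have key : ∀ A : Finset V, f (S ∪ A) ≤ f S + ∑ o ∈ A, (f (insert o S) - f S) := by
      intro A
      induction A using Finset.induction_on with
      | empty => simp
      | @insert a A ha ih =>
        rw [Finset.sum_insert ha]
        have hins : S ∪ insert a A = insert a (S ∪ A) := by
          ext x; simp [or_comm, or_left_comm, or_assoc]
        by_cases haS : a ∈ S ∪ A
        · have : insert a (S ∪ A) = S ∪ A := Finset.insert_eq_self.mpr haS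
          rw [hins, this]
          have h0 : (0:ℝ) ≤ f (insert a S) - f S := by
            have := hmono S (insert a S) (subset_insert a S)
            linarith
          linarith
        · have hsub' := hsub S (S ∪ A) a Finset.subset_union_left haS
          rw [hins]
          linarith
    have hbound : ∀ o ∈ O, f (insert o S) - f S < (1 / k) * (T - f S) := fun o _ => hmarg o
    have hcardle : (O.card : ℝ) ≤ (k : ℝ) := by exact_mod_cast hO
    have hcpos : (0:ℝ) ≤ (1 / k) * (T - f S) :=
      mul_nonneg (by positivity) (by linarith)
    have h1 : f O ≤ f (S ∪ O) := hmono O (S ∪ O) Finset.subset_union_right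
    have h2 := key O
    have h3 : (O.card : ℝ) * ((1 / k) * (T - f S)) ≤ (k:ℝ) * ((1 / k) * (T - f S)) :=
      mul_le_mul_of_nonneg_right hcardle hcpos
    have h4 : (k:ℝ) * ((1 / k) * (T - f S)) = T - f S := by
      field_simp
    rcases O.eq_empty_or_nonempty with rfl | hne
    · calc f ∅ ≤ f S := hmono ∅ S (Finset.empty_subset S)
        _ < T := hTfS
    · have hsumlt : ∑ o ∈ O, (f (insert o S) - f S) < (O.card : ℝ) * ((1 / k) * (T - f S)) := by
        have h := Finset.sum_lt_sum_of_nonempty hne hbound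
        rwa [Finset.sum_const, nsmul_eq_mul] at h
      linarith
  refine ⟨main, ?_⟩
  rintro ⟨O, hO, hfO⟩
  by_contra h
  push_neg at h
  exact absurd (main (fun o => h o) O hO) (not_lt.mpr hfO)
end

section
/- For any fixed graph L on vertex set V, the reachability coverage function S ↦ |Γ(S,L)| is submodular: for X ⊆ Y ⊆ V and v ∉ Y, |Γ(X ∪ {v},L)| - |Γ(X,L)| ≥ |Γ(Y ∪ {v},L)| - |Γ(Y,L)|. Consequently, the influence spread σ(S) = E_L[|Γ(S,L)|] is submodular as an expectation of submodular functions. -/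
open Finset

/-- For each fixed live-edge graph `L = r ω`, the reachability coverage function
`S ↦ |Γ(S,L)|` is submodular, and hence the influence spread
`σ(S) = E_L[|Γ(S,L)|]` is submodular as an expectation of submodular functions. -/
theorem influence_spread_submodular
    {V : Type*} [Fintype V] [DecidableEq V] {Ω : Type*} [Fintype Ω]
    (w : Ω → ℝ) (hw0 : ∀ ω, 0 ≤ w ω) (hw1 : ∑ ω, w ω = 1)
    (r : Ω → V → V → Prop)
    (Γ : Finset V → Ω → Set V)
    (hΓ : ∀ (S : Finset V) (ω : Ω),
      Γ S ω = {v : V | ∃ u ∈ S, Relation.ReflTransGen (r ω) u v})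
    (σ : Finset V → ℝ)
    (hσ : ∀ S : Finset V, σ S = ∑ ω, w ω * (Γ S ω).ncard) :
    (∀ (X Y : Finset V) (v : V) (ω : Ω), X ⊆ Y → v ∉ Y →
      ((Γ (insert v X) ω).ncard : ℝ) - (Γ X ω).ncard ≥
        ((Γ (insert v Y) ω).ncard : ℝ) - (Γ Y ω).ncard) ∧
    (∀ (X Y : Finset V) (v : V), X ⊆ Y → v ∉ Y →
      σ (insert v X) - σ X ≥ σ (insert v Y) - σ Y) := by
  have key : ∀ (X Y : Finset V) (v : V) (ω : Ω), X ⊆ Y → v ∉ Y →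
      ((Γ (insert v X) ω).ncard : ℝ) - (Γ X ω).ncard ≥
        ((Γ (insert v Y) ω).ncard : ℝ) - (Γ Y ω).ncard := by
    intro X Y v ω hXY _
    set D : Set V := {u : V | Relation.ReflTransGen (r ω) v u} with hD
    have hins : ∀ S : Finset V, Γ (insert v S) ω = Γ S ω ∪ D := by
      intro S
      rw [hΓ, hΓ]
      ext u
      simp only [Set.mem_setOf_eq, Set.mem_union, Finset.mem_insert, hD]
      constructor
      · rintro ⟨x, hx | hx, h⟩
        · exact Or.inr (hx ▸ h)
        · exact Or.inl ⟨x, hx, h⟩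
      · rintro (⟨x, hx, h⟩ | h)
        · exact ⟨x, Or.inr hx, h⟩
        · exact ⟨v, Or.inl rfl, h⟩
    have hsub : Γ X ω ⊆ Γ Y ω := by
      rw [hΓ, hΓ]
      rintro u ⟨x, hx, h⟩
      exact ⟨x, hXY hx, h⟩
    have hcard : ∀ S : Finset V,
        (Γ (insert v S) ω).ncard = (Γ S ω).ncard + (D \ Γ S ω).ncard := by
      intro S
      rw [hins]
      have : Γ S ω ∪ D = Γ S ω ∪ (D \ Γ S ω) := by
        rw [Set.union_diff_self]
      rw [this, Set.ncard_union_eq (Set.disjoint_sdiff_right)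
        (Set.toFinite _) (Set.toFinite _)]
    rw [hcard X, hcard Y]
    push_cast
    have hmono : (D \ Γ Y ω).ncard ≤ (D \ Γ X ω).ncard :=
      Set.ncard_le_ncard (Set.diff_subset_diff_right hsub) (Set.toFinite _)
    have := (Nat.cast_le (α := ℝ)).2 hmono
    linarith
  refine ⟨key, ?_⟩
  intro X Y v hXY hvY
  simp only [hσ]
  rw [← Finset.sum_sub_distrib, ← Finset.sum_sub_distrib]
  apply Finset.sum_le_sum
  intro ω _
  have h := key X Y v ω hXY hvY
  have := hw0 ω
  nlinarith [key X Y v ω hXY hvY]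
end

section
/- In the independent cascade model, the expected number of edges checked when sampling the reverse reachable set of a uniformly random node, divided by m, is at most OPT/n. Formally, if AVG·m = (1/n)·Σ_{v∈V} Σ_{e∈E} Pr[edge e is checked when sampling R_v], then AVG·m = (1/n)·Σ_{(u,w)∈E} σ({w}), and hence AVG ≤ OPT/n, where OPT = max_{|S| ≤ k} σ(S) with k ≥ 1. -/
open Finset

/-- The expected fraction `AVG` of edges checked when sampling the reverse reachable set
of a uniformly random node satisfies `AVG·m = (1/n)·Σ_{(u,w)∈E} σ({w})`, hence
`AVG ≤ OPT/n` (Claim 3.3 of Borgs et al.). -/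
theorem avg_rr_cost_le_opt
    {V : Type*} [Fintype V] [DecidableEq V]
    (E : Finset (V × V)) (n m : ℕ) (hn : n = Fintype.card V) (hm : m = E.card)
    (hm1 : 1 ≤ m)
    (σ : Finset V → ℝ)
    (Pr : V → V × V → ℝ)  -- Pr v e : probability edge e is checked when sampling R_v
    (hsym : ∀ e ∈ E, ∑ v : V, Pr v e = σ {e.2})
    (AVG : ℝ)
    (hAVG : AVG * m = (1 / n) * ∑ v : V, ∑ e ∈ E, Pr v e)
    (k : ℕ) (hk : 1 ≤ k) (OPT : ℝ) (hOPT0 : 0 ≤ OPT)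
    (hOPT : ∀ S : Finset V, S.card ≤ k → σ S ≤ OPT) :
    AVG * m = (1 / n) * ∑ e ∈ E, σ {e.2} ∧ AVG ≤ OPT / n := by
  have hswap : ∑ v : V, ∑ e ∈ E, Pr v e = ∑ e ∈ E, σ {e.2} := by
    rw [Finset.sum_comm]
    exact Finset.sum_congr rfl fun e he => hsym e he
  have heq : AVG * m = (1 / n) * ∑ e ∈ E, σ {e.2} := by rw [hAVG, hswap]
  refine ⟨heq, ?_⟩
  -- V is nonempty since E is nonempty
  have hEne : E.Nonempty := Finset.card_pos.mp (by omega)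
  obtain ⟨e0, he0⟩ := hEne
  have hnpos : 0 < n := by
    rw [hn]
    exact Fintype.card_pos_iff.mpr ⟨e0.1⟩
  have hnR : (0:ℝ) < n := by exact_mod_cast hnpos
  have hmR : (0:ℝ) < m := by exact_mod_cast hm1
  have hsum_le : ∑ e ∈ E, σ {e.2} ≤ m * OPT := by
    calc ∑ e ∈ E, σ {e.2} ≤ ∑ e ∈ E, OPT := by
          refine Finset.sum_le_sum fun e he => hOPT _ ?_
          simpa using hk
      _ = m * OPT := by rw [Finset.sum_const, hm]; ring
  have : AVG * m ≤ (1 / n) * (m * OPT) := by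
    rw [heq]
    exact mul_le_mul_of_nonneg_left hsum_le (by positivity)
  have h2 : AVG * m ≤ (OPT / n) * m := by
    calc AVG * m ≤ (1 / n) * (m * OPT) := this
      _ = (OPT / n) * m := by ring
  exact le_of_mul_le_mul_right h2 hmR
end

section
/- Multi-threshold greedy guarantee for MAX-k coverage: let f be monotone submodular with f(∅)=0, OPT = max_{|S| ≤ k} f(S) ≥ 1, and ε ∈ (0,1). Suppose for each i, OPT_i = (1+ε)^i, and thread i maintains S_i built greedily by adding elements whose marginal gain is at least (1/k)·(OPT_i - f(S_i)), stopping when either |S_i| = k or no element has such marginal gain. Let i be the index with OPT_i ≤ OPT < OPT_{i+1}. Then f(S_i) ≥ (1 - 1/e - ε)·OPT. -/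
open Finset Real

lemma submod_union_sum {V : Type*} [DecidableEq V] (f : Finset V → ℝ)
    (hmono : ∀ X Y : Finset V, X ⊆ Y → f X ≤ f Y)
    (hsub : ∀ (X Y : Finset V) (e : V), X ⊆ Y → e ∉ Y →
      f (insert e X) - f X ≥ f (insert e Y) - f Y)
    (S T : Finset V) :
    f (S ∪ T) ≤ f S + ∑ o ∈ T, (f (insert o S) - f S) := by
  induction T using Finset.induction with
  | empty => simp
  | @insert a T haT ih =>
    rw [Finset.sum_insert haT]
    have hrw : S ∪ insert a T = insert a (S ∪ T) := by
      ext x; simp [or_comm, or_left_comm, or_assoc]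
    rw [hrw]
    by_cases h : a ∈ S ∪ T
    · rw [Finset.insert_eq_self.mpr h]
      have h0 : 0 ≤ f (insert a S) - f S := by
        have := hmono S (insert a S) (Finset.subset_insert a S); linarith
      linarith
    · have := hsub S (S ∪ T) a Finset.subset_union_left h
      linarith

/-- Multi-threshold greedy guarantee for MAX-k coverage: the thread whose guess
`OPT_i = (1+ε)^i` satisfies `OPT_i ≤ OPT < OPT_{i+1}` outputs a set `S_i` with
`f(S_i) ≥ (1 - 1/e - ε)·OPT`. -/
theorem multi_threshold_greedy
    {V : Type*} [DecidableEq V] [Fintype V] [Nonempty V] (f : Finset V → ℝ)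
    (hmono : ∀ X Y : Finset V, X ⊆ Y → f X ≤ f Y)
    (hsub : ∀ (X Y : Finset V) (e : V), X ⊆ Y → e ∉ Y →
      f (insert e X) - f X ≥ f (insert e Y) - f Y)
    (hempty : f ∅ = 0)
    (k : ℕ) (hk : 0 < k) (ε : ℝ) (hε0 : 0 < ε) (hε1 : ε < 1)
    (OPT : ℝ) (hOPT1 : 1 ≤ OPT)
    (hub : ∀ S : Finset V, S.card ≤ k → f S ≤ OPT)
    (hattain : ∃ O : Finset V, O.card ≤ k ∧ f O = OPT)
    (i : ℕ) (hi : (1 + ε) ^ i ≤ OPT ∧ OPT < (1 + ε) ^ (i + 1))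
    (Si : Finset V)
    (hthread :
      (∃ S : ℕ → Finset V, S 0 = ∅ ∧ S k = Si ∧
        (∀ j < k, ∃ e : V, S (j + 1) = insert e (S j)) ∧
        (∀ j < k, f (S (j + 1)) - f (S j) ≥ (1 / k) * ((1 + ε) ^ i - f (S j)))) ∨
      (Si.card < k ∧
        ∀ o : V, f (insert o Si) - f Si < (1 / k) * ((1 + ε) ^ i - f Si))) :
    f Si ≥ (1 - 1 / Real.exp 1 - ε) * OPT := by
  set P : ℝ := (1 + ε) ^ i with hP
  have hPpos : 0 < P := pow_pos (by linarith) i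
  have hkR : (0:ℝ) < (k:ℝ) := by exact_mod_cast hk
  have he1 : (1:ℝ) < Real.exp 1 := by
    have := Real.exp_one_gt_d9; linarith
  have hPup : OPT < (1 + ε) * P := by
    have := hi.2; rw [pow_succ] at this; nlinarith [this]
  rcases hthread with ⟨S, h0, hkSi, _, hmarg⟩ | ⟨hcard, hstall⟩
  · -- greedy ran k full steps
    have key : ∀ j ≤ k, P - f (S j) ≤ (1 - 1/(k:ℝ))^j * P := by
      intro j
      induction j with
      | zero => intro _; simp [h0, hempty]
      | succ j ih =>
        intro hjk
        have hj : j < k := hjk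
        have ihj := ih (le_of_lt hj)
        have hm := hmarg j hj
        have hstep : P - f (S (j+1)) ≤ (1 - 1/(k:ℝ)) * (P - f (S j)) := by
          have : (1/(k:ℝ)) * (P - f (S j)) ≤ f (S (j+1)) - f (S j) := hm
          ring_nf
          ring_nf at this
          nlinarith [this]
        have hfac : (0:ℝ) ≤ 1 - 1/(k:ℝ) := by
          have : 1/(k:ℝ) ≤ 1 := by
            rw [div_le_one hkR]; exact_mod_cast hk
          linarith
        calc P - f (S (j+1)) ≤ (1 - 1/(k:ℝ)) * (P - f (S j)) := hstep
          _ ≤ (1 - 1/(k:ℝ)) * ((1 - 1/(k:ℝ))^j * P) := by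
              exact mul_le_mul_of_nonneg_left ihj hfac
          _ = (1 - 1/(k:ℝ))^(j+1) * P := by ring
    have hpow : (1 - 1/(k:ℝ))^k ≤ 1 / Real.exp 1 := by
      have h1 : (1 - 1/(k:ℝ)) ≤ Real.exp (-(1/(k:ℝ))) := by
        have := Real.add_one_le_exp (-(1/(k:ℝ))); linarith
      have hfac : (0:ℝ) ≤ 1 - 1/(k:ℝ) := by
        have : 1/(k:ℝ) ≤ 1 := by
          rw [div_le_one hkR]; exact_mod_cast hk
        linarith
      calc (1 - 1/(k:ℝ))^k ≤ (Real.exp (-(1/(k:ℝ))))^k := pow_le_pow_left₀ hfac h1 k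
        _ = Real.exp ((k:ℝ) * (-(1/(k:ℝ)))) := (Real.exp_nat_mul _ k).symm
        _ = Real.exp (-1) := by
            congr 1; field_simp
        _ = 1 / Real.exp 1 := by rw [Real.exp_neg]; ring
    have hkey := key k le_rfl
    rw [hkSi] at hkey
    have hfSi : f Si ≥ (1 - 1/Real.exp 1) * P := by
      have : (1 - 1/(k:ℝ))^k * P ≤ (1/Real.exp 1) * P :=
        mul_le_mul_of_nonneg_right hpow (le_of_lt hPpos)
      nlinarith [hkey, this]
    have hepos : 0 < Real.exp 1 := Real.exp_pos 1
    have h1e : 0 < 1 - 1/Real.exp 1 := by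
      have : 1/Real.exp 1 < 1 := by
        rw [div_lt_one hepos]; linarith
      linarith
    -- f Si ≥ (1-1/e) P and OPT < (1+ε) P, P ≤ OPT
    nlinarith [hfSi, hPup, hi.1, mul_pos hε0 hPpos, mul_pos (mul_pos hε0 hε0) hPpos,
      mul_pos hε0 (mul_pos hPpos (by positivity : (0:ℝ) < 1/Real.exp 1))]
  · -- stalled case: derive contradiction OPT < P
    exfalso
    obtain ⟨O, hOcard, hOf⟩ := hattain
    obtain ⟨o0⟩ := ‹Nonempty V›
    have h00 : 0 ≤ f (insert o0 Si) - f Si := by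
      have := hmono Si (insert o0 Si) (Finset.subset_insert o0 Si); linarith
    have hDpos : 0 < P - f Si := by
      have h2 : 0 < (1/(k:ℝ)) * (P - f Si) := lt_of_le_of_lt h00 (hstall o0)
      have h3 : P - f Si = (k:ℝ) * ((1/(k:ℝ)) * (P - f Si)) := by field_simp
      rw [h3]; exact mul_pos hkR h2
    have hOne : O.Nonempty := by
      by_contra h
      rw [Finset.not_nonempty_iff_eq_empty] at h
      rw [h, hempty] at hOf
      linarith
    have hsum : f (Si ∪ O) ≤ f Si + ∑ o ∈ O, (f (insert o Si) - f Si) :=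
      submod_union_sum f hmono hsub Si O
    have hsumlt : ∑ o ∈ O, (f (insert o Si) - f Si) <
        ∑ o ∈ O, (1/(k:ℝ)) * (P - f Si) :=
      Finset.sum_lt_sum_of_nonempty hOne (fun o _ => hstall o)
    have hsum2 : ∑ o ∈ O, (1/(k:ℝ)) * (P - f Si) ≤ P - f Si := by
      rw [Finset.sum_const, nsmul_eq_mul]
      have h1 : (O.card : ℝ) ≤ (k:ℝ) := by exact_mod_cast hOcard
      have h2 : 0 ≤ (1/(k:ℝ)) * (P - f Si) := by positivity
      calc (O.card : ℝ) * ((1/(k:ℝ)) * (P - f Si))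
          ≤ (k:ℝ) * ((1/(k:ℝ)) * (P - f Si)) := mul_le_mul_of_nonneg_right h1 h2
        _ = P - f Si := by field_simp
    have hOle : OPT ≤ f (Si ∪ O) := by
      rw [← hOf]; exact hmono O (Si ∪ O) Finset.subset_union_right
    have : OPT < P := by linarith
    linarith [hi.1]
end

section
/- In the hard instance, if B_τ ⊆ A_i, then the influence spread of node v_{1,i} is at least (mt+1)·|B_τ| + 1 > 2m·|B_τ| for t ≥ 2; thus a (2/t)-approximate solution has influence exceeding 2m·|B_τ|, distinguishing the YES case. -/
open Finset

/-- Completeness of the IC hard instance: if `B_τ ⊆ A_i`, the influence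
`1 + |A_i| + |A_i ∩ B_τ|·m·t` of node `v_{1,i}` is at least `1 + |B_τ|·(mt+1)`, which
exceeds `2·m·|B_τ|` when `t ≥ 2`. -/
theorem hard_instance_completeness
    {α : Type*} [DecidableEq α] (A B : Finset α) (m t : ℕ)
    (hm : 1 ≤ m) (ht : 2 ≤ t) (hB1 : 1 ≤ B.card)
    (hBA : B ⊆ A) :
    (1 + A.card + (A ∩ B).card * m * t ≥ 1 + B.card * (m * t + 1)) ∧
    (1 + B.card * (m * t + 1) > 2 * m * B.card) := by
  have hAB : A ∩ B = B := inter_eq_right.mpr hBA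
  have hcard : B.card ≤ A.card := card_le_card hBA
  constructor
  · rw [hAB]; nlinarith
  · nlinarith [Nat.mul_le_mul_left m ht, Nat.mul_le_mul_right B.card (Nat.mul_le_mul_left m ht)]
end
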